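/- Let l, r be positive integers, let A be an l×r matrix with entries a_{ji} ∈ {0,1}, let d_1,…,d_l > 0, and fix i ∈ [r]. For y ∈ ℝ^r write ⟨A_j, e^y⟩ := ∑_{k=1}^r a_{jk} e^{y_k} and u_i(y) := ∏_{j : a_{ji}=1}(1 − ⟨A_j, e^y⟩/d_j). Then the function y ↦ −y_i − ln((3·u_i(y) − 1)/4) is convex on the set { y ∈ ℝ^r : ⟨A_j, e^y⟩ < d_j for all j, and u_i(y) > 1/3 }. -/

import Mathlib

open Real Set Finset

section Helpers

variable {E : Type*} [AddCommGroup E] [Module ℝ E] {s : Set E} {f g : E → ℝ}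

private lemma aux_comb_pos {p q a b : ℝ} (hp : 0 < p) (hq : 0 < q) (ha : 0 ≤ a) (hb : 0 ≤ b)
    (hab : a + b = 1) : 0 < a * p + b * q := by
  rcases ha.lt_or_eq with h | h
  · have : 0 ≤ b * q := mul_nonneg hb hq.le
    nlinarith
  · have hb1 : b = 1 := by linarith
    rw [← h, hb1]; simpa using hq

private lemma convexOn_congr (hf : ConvexOn ℝ s f) (h : Set.EqOn f g s) : ConvexOn ℝ s g := by
  refine ⟨hf.1, fun x hx y hy a b ha hb hab => ?_⟩
  rw [← h hx, ← h hy, ← h (hf.1 hx hy ha hb hab)]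
  exact hf.2 hx hy ha hb hab

private lemma concaveOn_log_comp (hf : ConcaveOn ℝ s f) (hpos : ∀ x ∈ s, 0 < f x) :
    ConcaveOn ℝ s (fun x => Real.log (f x)) := by
  refine ⟨hf.1, fun x hx y hy a b ha hb hab => ?_⟩
  have hx0 := hpos x hx
  have hy0 := hpos y hy
  have hcomb : 0 < a * f x + b * f y := aux_comb_pos hx0 hy0 ha hb hab
  have h1 : a • Real.log (f x) + b • Real.log (f y) ≤ Real.log (a • f x + b • f y) :=
    strictConcaveOn_log_Ioi.concaveOn.2 (mem_Ioi.2 hx0) (mem_Ioi.2 hy0) ha hb hab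
  refine h1.trans ?_
  have h2 : a • f x + b • f y ≤ f (a • x + b • y) := hf.2 hx hy ha hb hab
  exact Real.log_le_log (by simpa [smul_eq_mul] using hcomb) h2

private lemma convexOn_exp_comp (hf : ConvexOn ℝ s f) :
    ConvexOn ℝ s (fun x => Real.exp (f x)) := by
  refine ⟨hf.1, fun x hx y hy a b ha hb hab => ?_⟩
  have h1 : Real.exp (f (a • x + b • y)) ≤ Real.exp (a • f x + b • f y) :=
    Real.exp_le_exp.2 (hf.2 hx hy ha hb hab)
  refine h1.trans ?_
  have h2 := convexOn_exp.2 (Set.mem_univ (f x)) (Set.mem_univ (f y)) ha hb hab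
  simpa [smul_eq_mul] using h2

private lemma convexOn_finset_sum {ι : Type*} (t : Finset ι) {F : ι → E → ℝ}
    (hs : Convex ℝ s) (h : ∀ i ∈ t, ConvexOn ℝ s (F i)) :
    ConvexOn ℝ s (fun x => ∑ i ∈ t, F i x) := by
  classical
  induction t using Finset.induction_on with
  | empty => simpa using convexOn_const 0 hs
  | insert a t' hnot ih =>
    have h1 : ConvexOn ℝ s (F a) := h a (Finset.mem_insert_self a t')
    have h2 : ConvexOn ℝ s (fun x => ∑ i ∈ t', F i x) :=
      ih fun i hi => h i (Finset.mem_insert_of_mem hi)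
    simpa [Finset.sum_insert hnot, Pi.add_def] using h1.add h2

private lemma concaveOn_finset_sum {ι : Type*} (t : Finset ι) {F : ι → E → ℝ}
    (hs : Convex ℝ s) (h : ∀ i ∈ t, ConcaveOn ℝ s (F i)) :
    ConcaveOn ℝ s (fun x => ∑ i ∈ t, F i x) := by
  classical
  induction t using Finset.induction_on with
  | empty => simpa using concaveOn_const 0 hs
  | insert a t' hnot ih =>
    have h1 : ConcaveOn ℝ s (F a) := h a (Finset.mem_insert_self a t')
    have h2 : ConcaveOn ℝ s (fun x => ∑ i ∈ t', F i x) :=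
      ih fun i hi => h i (Finset.mem_insert_of_mem hi)
    simpa [Finset.sum_insert hnot, Pi.add_def] using h1.add h2

end Helpers

/-- a route using negativity as its entanglement measure contributes a
convex term `y ↦ −y_i − ln((3u_i(y) − 1)/4)` to the transformed QNUM objective
(after the change of variables `x = e^y`), on the region where `u_i(y) > 1/3`. -/
theorem negativity_contribution_convex_in_log_rates
    (l r : ℕ) (hl : 0 < l) (hr : 0 < r)
    (A : Fin l → Fin r → ℝ) (hA : ∀ j i, A j i = 0 ∨ A j i = 1)
    (d : Fin l → ℝ) (hd : ∀ j, 0 < d j) (i : Fin r) :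
    ConvexOn ℝ
      { y : Fin r → ℝ |
        (∀ j, ∑ k, A j k * Real.exp (y k) < d j) ∧
        1 / 3 < ∏ j ∈ Finset.univ.filter (fun j => A j i = 1),
            (1 - (∑ k, A j k * Real.exp (y k)) / d j) }
      (fun y => -(y i) -
        Real.log ((3 * ∏ j ∈ Finset.univ.filter (fun j => A j i = 1),
            (1 - (∑ k, A j k * Real.exp (y k)) / d j) - 1) / 4)) := by
  classical
  set J : Finset (Fin l) := Finset.univ.filter (fun j => A j i = 1) with hJ
  set sf : Fin l → (Fin r → ℝ) → ℝ := fun j y => ∑ k, A j k * Real.exp (y k) with hsf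
  set gf : Fin l → (Fin r → ℝ) → ℝ := fun j y => 1 - sf j y / d j with hgf
  set w : (Fin r → ℝ) → ℝ := fun y => ∑ j ∈ J, Real.log (gf j y) with hw
  set S1 : Set (Fin r → ℝ) := { y | ∀ j, sf j y < d j } with hS1
  -- each sf j is convex on univ
  have hsfconv : ∀ j, ConvexOn ℝ (Set.univ : Set (Fin r → ℝ)) (sf j) := by
    intro j
    apply convexOn_finset_sum _ convex_univ
    intro k _
    have hproj : ConvexOn ℝ (Set.univ : Set (Fin r → ℝ)) (fun y => Real.exp (y k)) := by
      have := convexOn_exp.comp_linearMap (LinearMap.proj k : (Fin r → ℝ) →ₗ[ℝ] ℝ)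
      exact this
    have hAk : 0 ≤ A j k := by rcases hA j k with h | h <;> rw [h] <;> norm_num
    have := hproj.smul hAk
    simpa [smul_eq_mul] using this
  -- S1 is convex
  have hS1conv : Convex ℝ S1 := by
    have : S1 = ⋂ j, { y | sf j y < d j } := by
      ext y; simp [hS1, Set.mem_iInter]
    rw [this]
    refine convex_iInter fun j => ?_
    have := (hsfconv j).convex_lt (d j)
    simpa using this
  -- on S1, each gf j is positive
  have hgpos : ∀ j, ∀ y ∈ S1, 0 < gf j y := by
    intro j y hy
    have h1 : sf j y < d j := hy j
    have h2 : sf j y / d j < 1 := (div_lt_one (hd j)).2 h1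
    simp only [hgf]; linarith
  -- each gf j is concave on S1
  have hgconc : ∀ j, ConcaveOn ℝ S1 (gf j) := by
    intro j
    have h1 : ConvexOn ℝ S1 (sf j) := (hsfconv j).subset (Set.subset_univ _) hS1conv
    have h2 : ConvexOn ℝ S1 (fun y => sf j y / d j) := by
      have := h1.smul (le_of_lt (inv_pos.2 (hd j)))
      simpa [smul_eq_mul, div_eq_inv_mul] using this
    have h3 : ConcaveOn ℝ S1 (fun y => -(sf j y / d j)) := h2.neg
    have h4 := h3.add (concaveOn_const (1 : ℝ) hS1conv)
    simpa [hgf, sub_eq_neg_add, Pi.add_def] using h4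
  -- w is concave on S1
  have hwconc : ConcaveOn ℝ S1 w := by
    apply concaveOn_finset_sum _ hS1conv
    intro j _
    exact concaveOn_log_comp (hgconc j) (hgpos j)
  -- on S1, the product u equals exp (w y)
  have huexp : ∀ y ∈ S1, (∏ j ∈ J, gf j y) = Real.exp (w y) := by
    intro y hy
    rw [hw, Real.exp_sum]
    exact Finset.prod_congr rfl fun j _ => (Real.exp_log (hgpos j y hy)).symm
  -- identify S with a sublevel set of the convex function -w on S1
  have hSdesc : { y : Fin r → ℝ |
        (∀ j, ∑ k, A j k * Real.exp (y k) < d j) ∧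
        1 / 3 < ∏ j ∈ Finset.univ.filter (fun j => A j i = 1),
            (1 - (∑ k, A j k * Real.exp (y k)) / d j) }
      = { y ∈ S1 | -w y < Real.log 3 } := by
    ext y
    simp only [Set.mem_setOf_eq, Set.mem_sep_iff]
    constructor
    · rintro ⟨h1, h2⟩
      have hy1 : y ∈ S1 := h1
      refine ⟨hy1, ?_⟩
      have h3 : (1 : ℝ) / 3 < Real.exp (w y) := by
        rw [← huexp y hy1]; exact h2
      have h4 : Real.exp (-w y) < 3 := by
        rw [Real.exp_neg]
        have h5 : (3 : ℝ)⁻¹ < Real.exp (w y) := by simpa [one_div] using h3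
        have := (inv_lt_comm₀ (Real.exp_pos (w y)) (by norm_num : (0:ℝ) < 3)).2
        exact this (by simpa using h5)
      exact (Real.lt_log_iff_exp_lt (by norm_num)).2 (by simpa using h4)
    · rintro ⟨hy1, h2⟩
      refine ⟨hy1, ?_⟩
      have h4 : Real.exp (-w y) < 3 := (Real.lt_log_iff_exp_lt (by norm_num)).1 h2
      have h3 : (1 : ℝ) / 3 < Real.exp (w y) := by
        rw [Real.exp_neg] at h4
        have := (inv_lt_comm₀ (by norm_num : (0:ℝ) < 3) (Real.exp_pos (w y))).2
          (by simpa using h4)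
        simpa [one_div] using this
      rw [show (∏ j ∈ Finset.univ.filter (fun j => A j i = 1),
            (1 - (∑ k, A j k * Real.exp (y k)) / d j)) = ∏ j ∈ J, gf j y from rfl,
        huexp y hy1]
      exact h3
  rw [hSdesc]
  set S : Set (Fin r → ℝ) := { y ∈ S1 | -w y < Real.log 3 } with hS
  have hSsub : S ⊆ S1 := fun y hy => hy.1
  -- S is convex
  have hSconv : Convex ℝ S := hwconc.neg.convex_lt (Real.log 3)
  -- w is concave on S
  have hwS : ConcaveOn ℝ S w := hwconc.subset hSsub hSconv
  -- on S, exp (-w y) < 3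
  have hlt3 : ∀ y ∈ S, Real.exp (-w y) < 3 := by
    intro y hy
    exact (Real.lt_log_iff_exp_lt (by norm_num)).1 hy.2
  -- concavity of y ↦ 3 - exp(-(w y)) on S
  have hinner : ConcaveOn ℝ S (fun y => 3 - Real.exp (-w y)) := by
    have h1 : ConvexOn ℝ S (fun y => Real.exp (-w y)) := convexOn_exp_comp hwS.neg
    have h2 := h1.neg.add (concaveOn_const (3 : ℝ) hSconv)
    simpa [sub_eq_neg_add, Pi.add_def, Pi.neg_def] using h2
  -- concavity of the log term
  have hlogconc : ConcaveOn ℝ S (fun y => w y + Real.log (3 - Real.exp (-w y))) := by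
    refine hwS.add (concaveOn_log_comp hinner ?_)
    intro y hy
    have := hlt3 y hy
    linarith
  -- the target function agrees with linear + (- concave) + const on S
  have hEq : Set.EqOn
      (fun y => -(y i) - (w y + Real.log (3 - Real.exp (-w y))) + Real.log 4)
      (fun y => -(y i) -
        Real.log ((3 * ∏ j ∈ Finset.univ.filter (fun j => A j i = 1),
            (1 - (∑ k, A j k * Real.exp (y k)) / d j) - 1) / 4)) S := by
    intro y hy
    have hy1 : y ∈ S1 := hSsub hy
    have hprod : (∏ j ∈ Finset.univ.filter (fun j => A j i = 1),
        (1 - (∑ k, A j k * Real.exp (y k)) / d j)) = Real.exp (w y) := huexp y hy1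
    have hkey : 3 * Real.exp (w y) - 1 = Real.exp (w y) * (3 - Real.exp (-w y)) := by
      rw [Real.exp_neg]
      field_simp
    have hpos1 : 0 < Real.exp (w y) := Real.exp_pos _
    have hpos2 : 0 < 3 - Real.exp (-w y) := by have := hlt3 y hy; linarith
    simp only [hprod]
    rw [hkey, Real.log_div (by positivity) (by norm_num),
      Real.log_mul (ne_of_gt hpos1) (ne_of_gt hpos2), Real.log_exp]
    ring
  refine convexOn_congr ?_ hEq
  -- convexity of the surrogate
  have hlin : ConvexOn ℝ S (fun y : Fin r → ℝ => -(y i)) := by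
    have hproj : ConvexOn ℝ S (fun y : Fin r → ℝ => y i) := by
      have := (convexOn_id (convex_univ : Convex ℝ (Set.univ : Set ℝ))).comp_linearMap
        (LinearMap.proj i : (Fin r → ℝ) →ₗ[ℝ] ℝ)
      exact (by simpa using this : ConvexOn ℝ (Set.univ : Set (Fin r → ℝ)) fun y => y i).subset
        (Set.subset_univ _) hSconv
    have hnegproj : ConcaveOn ℝ S (fun y : Fin r → ℝ => -(y i)) := hproj.neg
    -- a linear function is both convex and concave; prove convexity directly
    refine ⟨hSconv, fun x hx y hy a b ha hb hab => ?_⟩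
    simp [smul_eq_mul]
  have h2 : ConvexOn ℝ S (fun y => -(w y + Real.log (3 - Real.exp (-w y)))) := hlogconc.neg
  have h3 := (hlin.add h2).add (convexOn_const (Real.log 4) hSconv)
  simpa [sub_eq_add_neg, Pi.add_def] using h3
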